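/- Let g₀ : [0,∞) → ℝ be smooth with g₀(0) = 0 and |g₀^{(k)}(τ)| ≤ C_k e^{-ντ} for all k ≥ 0 and some ν > 0. Define G₀(ξ) = ∫₀^∞ e^{-iξτ} g₀(τ) dτ. Then for every k ≥ 0 there is a constant C_k with |d^k G₀/dξ^k (ξ)| ≤ C_k (1+|ξ|)^{-k-2}. -/

import Mathlib

open MeasureTheory Set

/-- One-sided Fourier transform of `g₀` (i.e. Fourier transform of the extension of `g₀`
by zero on `(-∞,0)`). -/
noncomputable def G0 (g₀ : ℝ → ℝ) (ξ : ℝ) : ℂ :=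
  ∫ τ in Ioi (0:ℝ), Complex.exp (-Complex.I * ξ * τ) * (g₀ τ : ℂ)

namespace Stmt1Aux

open Complex Filter

/-- The auxiliary family of oscillatory integrals. -/
noncomputable def J (g₀ : ℝ → ℝ) (m j : ℕ) (ξ : ℝ) : ℂ :=
  ∫ τ in Ioi (0:ℝ),
    Complex.exp (-Complex.I * ξ * τ) * (τ:ℂ)^m * (Complex.ofReal (iteratedDeriv j g₀ τ))

variable {g₀ : ℝ → ℝ} {ν : ℝ}

lemma norm_integrand (g₀ : ℝ → ℝ) (m j : ℕ) (ξ τ : ℝ) :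
    ‖Complex.exp (-Complex.I * ξ * τ) * (τ:ℂ)^m * (Complex.ofReal (iteratedDeriv j g₀ τ))‖
      = |τ|^m * |iteratedDeriv j g₀ τ| := by
  simp [Complex.norm_exp, abs_pow]

lemma decay_bound (hν : 0 < ν)
    (hdecay : ∀ k : ℕ, ∃ C : ℝ, ∀ τ : ℝ, 0 ≤ τ →
      |iteratedDeriv k g₀ τ| ≤ C * Real.exp (-ν * τ)) (m j : ℕ) :
    ∃ C : ℝ, 0 ≤ C ∧ ∀ τ : ℝ, 0 ≤ τ →
      |τ|^m * |iteratedDeriv j g₀ τ| ≤ C * Real.exp (-(ν/2) * τ) := by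
  obtain ⟨Cj, hCj⟩ := hdecay j
  have hCj0 : 0 ≤ Cj := by
    have h0 := hCj 0 le_rfl
    have := abs_nonneg (iteratedDeriv j g₀ 0)
    simp only [mul_zero, neg_zero, Real.exp_zero, mul_one] at h0
    linarith
  refine ⟨Cj * ((m.factorial : ℝ) * (2/ν)^m), by positivity, fun τ hτ => ?_⟩
  have hpow : τ^m ≤ (m.factorial : ℝ) * (2/ν)^m * Real.exp ((ν/2) * τ) := by
    have h1 : ((ν/2) * τ)^m / (m.factorial : ℝ) ≤ Real.exp ((ν/2) * τ) :=
      Real.pow_div_factorial_le_exp (x := ν/2*τ) (by positivity) m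
    have h2 : ((ν/2) * τ)^m = (ν/2)^m * τ^m := by rw [mul_pow]
    have h3 : (0:ℝ) < (ν/2)^m := by positivity
    have h4 : (2/ν)^m * (ν/2)^m = 1 := by
      rw [← mul_pow]
      rw [div_mul_div_comm]
      rw [mul_comm ν 2, div_self (by positivity : (0:ℝ) < 2*ν).ne']
      simp
    have hfac : (0:ℝ) < (m.factorial : ℝ) := by positivity
    calc τ^m = (m.factorial : ℝ) * ((2/ν)^m * (ν/2)^m) * τ^m / (m.factorial : ℝ) := by
          rw [h4]; field_simp
      _ = (m.factorial : ℝ) * (2/ν)^m * (((ν/2) * τ)^m / (m.factorial : ℝ)) := by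
          rw [h2]; ring
      _ ≤ (m.factorial : ℝ) * (2/ν)^m * Real.exp ((ν/2) * τ) := by
          apply mul_le_mul_of_nonneg_left h1 (by positivity)
  have habs : |τ| = τ := abs_of_nonneg hτ
  rw [habs]
  calc τ^m * |iteratedDeriv j g₀ τ|
      ≤ τ^m * (Cj * Real.exp (-ν * τ)) := by
        apply mul_le_mul_of_nonneg_left (hCj τ hτ) (by positivity)
    _ ≤ ((m.factorial : ℝ) * (2/ν)^m * Real.exp ((ν/2) * τ)) * (Cj * Real.exp (-ν * τ)) := by
        apply mul_le_mul_of_nonneg_right hpow (by positivity)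
    _ = Cj * ((m.factorial : ℝ) * (2/ν)^m) * (Real.exp ((ν/2) * τ) * Real.exp (-ν * τ)) := by
        ring
    _ = Cj * ((m.factorial : ℝ) * (2/ν)^m) * Real.exp (-(ν/2) * τ) := by
        rw [← Real.exp_add]; ring_nf

lemma cont_integrand (hsmooth : ContDiff ℝ (⊤ : ℕ∞) g₀) (m j : ℕ) (ξ : ℝ) :
    Continuous (fun τ : ℝ =>
      Complex.exp (-Complex.I * ξ * τ) * (τ:ℂ)^m * (Complex.ofReal (iteratedDeriv j g₀ τ))) := by
  have h1 : Continuous (iteratedDeriv j g₀) := hsmooth.continuous_iteratedDeriv j (by exact_mod_cast le_top)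
  fun_prop

lemma integrableOn_integrand (hν : 0 < ν) (hsmooth : ContDiff ℝ (⊤ : ℕ∞) g₀)
    (hdecay : ∀ k : ℕ, ∃ C : ℝ, ∀ τ : ℝ, 0 ≤ τ →
      |iteratedDeriv k g₀ τ| ≤ C * Real.exp (-ν * τ)) (m j : ℕ) (ξ : ℝ) :
    IntegrableOn (fun τ : ℝ =>
      Complex.exp (-Complex.I * ξ * τ) * (τ:ℂ)^m * (Complex.ofReal (iteratedDeriv j g₀ τ))) (Ioi 0) := by
  obtain ⟨C, hC0, hC⟩ := decay_bound hν hdecay m j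
  refine Integrable.mono' (g := fun τ => C * Real.exp (-(ν/2) * τ))
    ((exp_neg_integrableOn_Ioi 0 (by positivity : (0:ℝ) < ν/2)).const_mul C)
    ((cont_integrand hsmooth m j ξ).aestronglyMeasurable) ?_
  refine (ae_restrict_iff' measurableSet_Ioi).2 (ae_of_all _ fun τ hτ => ?_)
  rw [norm_integrand]
  exact hC τ (le_of_lt hτ)

lemma J_bound (hν : 0 < ν) (hsmooth : ContDiff ℝ (⊤ : ℕ∞) g₀)
    (hdecay : ∀ k : ℕ, ∃ C : ℝ, ∀ τ : ℝ, 0 ≤ τ →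
      |iteratedDeriv k g₀ τ| ≤ C * Real.exp (-ν * τ)) (m j : ℕ) :
    ∃ C : ℝ, 0 ≤ C ∧ ∀ ξ : ℝ, ‖J g₀ m j ξ‖ ≤ C := by
  obtain ⟨C, hC0, hC⟩ := decay_bound hν hdecay m j
  refine ⟨∫ τ in Ioi (0:ℝ), C * Real.exp (-(ν/2) * τ),
    integral_nonneg fun τ => by positivity, fun ξ => ?_⟩
  refine norm_integral_le_of_norm_le
    ((exp_neg_integrableOn_Ioi 0 (by positivity : (0:ℝ) < ν/2)).const_mul C) ?_
  refine (ae_restrict_iff' measurableSet_Ioi).2 (ae_of_all _ fun τ hτ => ?_)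
  rw [norm_integrand]
  exact hC τ (le_of_lt hτ)

lemma hasDerivAt_iterated (hsmooth : ContDiff ℝ (⊤ : ℕ∞) g₀) (j : ℕ) (τ : ℝ) :
    HasDerivAt (iteratedDeriv j g₀) (iteratedDeriv (j+1) g₀ τ) τ := by
  rw [iteratedDeriv_succ]
  exact ((hsmooth.differentiable_iteratedDeriv j
    (by exact_mod_cast lt_top_iff_ne_top.2 (by simp))) τ).hasDerivAt

lemma hasDerivAt_integrand (hsmooth : ContDiff ℝ (⊤ : ℕ∞) g₀) (m j : ℕ) (ξ τ : ℝ) :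
    HasDerivAt (fun τ : ℝ =>
      Complex.exp (-Complex.I * ξ * τ) * (τ:ℂ)^m * (Complex.ofReal (iteratedDeriv j g₀ τ)))
      (-Complex.I * ξ * (Complex.exp (-Complex.I * ξ * τ) * (τ:ℂ)^m * (Complex.ofReal (iteratedDeriv j g₀ τ)))
        + ((m:ℂ) * (Complex.exp (-Complex.I * ξ * τ) * (τ:ℂ)^(m-1) * (Complex.ofReal (iteratedDeriv j g₀ τ)))
          + Complex.exp (-Complex.I * ξ * τ) * (τ:ℂ)^m * (Complex.ofReal (iteratedDeriv (j+1) g₀ τ)))) τ := by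
  have h1 : HasDerivAt (fun τ : ℝ => Complex.exp (-Complex.I * ξ * τ))
      (-Complex.I * ξ * Complex.exp (-Complex.I * ξ * τ)) τ := by
    have hz : HasDerivAt (fun z : ℂ => Complex.exp (-Complex.I * ξ * z))
        (Complex.exp (-Complex.I * ξ * τ) * (-Complex.I * ξ)) (τ:ℂ) :=
      ((hasDerivAt_id ((τ:ℝ):ℂ)).const_mul (-Complex.I * ξ)).cexp.congr_deriv (by simp only [id_eq]; ring)
    have := hz.comp_ofReal
    simpa [mul_comm] using this
  have h2 : HasDerivAt (fun τ : ℝ => ((τ:ℂ))^m) ((m:ℂ) * (τ:ℂ)^(m-1)) τ :=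
    (hasDerivAt_pow m ((τ:ℝ):ℂ)).comp_ofReal
  have h3 : HasDerivAt (fun τ : ℝ => (Complex.ofReal (iteratedDeriv j g₀ τ)))
      ((Complex.ofReal (iteratedDeriv (j+1) g₀ τ))) τ :=
    (hasDerivAt_iterated hsmooth j τ).ofReal_comp
  have h := (h1.mul h2).mul h3
  convert h using 1
  all_goals first | rfl | (simp only [Pi.mul_apply]; ring)

lemma tendsto_integrand (hν : 0 < ν)
    (hdecay : ∀ k : ℕ, ∃ C : ℝ, ∀ τ : ℝ, 0 ≤ τ →
      |iteratedDeriv k g₀ τ| ≤ C * Real.exp (-ν * τ)) (m j : ℕ) (ξ : ℝ) :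
    Tendsto (fun τ : ℝ =>
      Complex.exp (-Complex.I * ξ * τ) * (τ:ℂ)^m * (Complex.ofReal (iteratedDeriv j g₀ τ)))
      atTop (nhds 0) := by
  obtain ⟨C, hC0, hC⟩ := decay_bound hν hdecay m j
  have h1 : Tendsto (fun τ : ℝ => -(ν/2) * τ) atTop atBot :=
    (tendsto_const_mul_atBot_of_neg (by linarith : -(ν/2) < 0)).2 tendsto_id
  have h2 : Tendsto (fun τ : ℝ => Real.exp (-(ν/2) * τ)) atTop (nhds 0) :=
    Real.tendsto_exp_atBot.comp h1
  have hg : Tendsto (fun τ : ℝ => C * Real.exp (-(ν/2) * τ)) atTop (nhds 0) := by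
    simpa using h2.const_mul C
  refine squeeze_zero_norm' ?_ hg
  filter_upwards [eventually_ge_atTop (0:ℝ)] with τ hτ
  rw [norm_integrand]
  exact hC τ hτ

lemma ibp (hν : 0 < ν) (hsmooth : ContDiff ℝ (⊤ : ℕ∞) g₀)
    (hdecay : ∀ k : ℕ, ∃ C : ℝ, ∀ τ : ℝ, 0 ≤ τ →
      |iteratedDeriv k g₀ τ| ≤ C * Real.exp (-ν * τ)) (m j : ℕ) (ξ : ℝ) :
    Complex.I * ξ * J g₀ m j ξ
      = (m:ℂ) * J g₀ (m-1) j ξ + J g₀ m (j+1) ξ + (0:ℂ)^m * (Complex.ofReal (iteratedDeriv j g₀ 0)) := by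
  set f : ℝ → ℂ := fun τ =>
    Complex.exp (-Complex.I * ξ * τ) * (τ:ℂ)^m * (Complex.ofReal (iteratedDeriv j g₀ τ)) with hf
  set f' : ℝ → ℂ := fun τ =>
    -Complex.I * ξ * (Complex.exp (-Complex.I * ξ * τ) * (τ:ℂ)^m * (Complex.ofReal (iteratedDeriv j g₀ τ)))
      + ((m:ℂ) * (Complex.exp (-Complex.I * ξ * τ) * (τ:ℂ)^(m-1) * (Complex.ofReal (iteratedDeriv j g₀ τ)))
        + Complex.exp (-Complex.I * ξ * τ) * (τ:ℂ)^m * (Complex.ofReal (iteratedDeriv (j+1) g₀ τ))) with hf'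
  have hint1 := integrableOn_integrand hν hsmooth hdecay m j ξ
  have hint2 := integrableOn_integrand hν hsmooth hdecay (m-1) j ξ
  have hint3 := integrableOn_integrand hν hsmooth hdecay m (j+1) ξ
  have hf'int : IntegrableOn f' (Ioi 0) :=
    (hint1.const_mul _).add ((hint2.const_mul _).add hint3)
  have key := integral_Ioi_of_hasDerivAt_of_tendsto' (f := f) (f' := f') (a := 0)
    (fun x _ => hasDerivAt_integrand hsmooth m j ξ x) hf'int
    (tendsto_integrand hν hdecay m j ξ)
  have hint23 : IntegrableOn (fun τ : ℝ =>
      (m:ℂ) * (Complex.exp (-Complex.I * ξ * τ) * (τ:ℂ)^(m-1)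
        * (Complex.ofReal (iteratedDeriv j g₀ τ)))
      + Complex.exp (-Complex.I * ξ * τ) * (τ:ℂ)^m
        * (Complex.ofReal (iteratedDeriv (j+1) g₀ τ))) (Ioi 0) :=
    (hint2.const_mul _).add hint3
  have hsplit : ∫ τ in Ioi (0:ℝ), f' τ
      = -Complex.I * ξ * J g₀ m j ξ
        + ((m:ℂ) * J g₀ (m-1) j ξ + J g₀ m (j+1) ξ) := by
    simp only [hf']
    rw [integral_add (hint1.const_mul _) hint23]
    rw [integral_add (hint2.const_mul _) hint3]
    rw [integral_const_mul, integral_const_mul]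
    rfl
  rw [hsplit] at key
  have hf0 : f 0 = (0:ℂ)^m * (Complex.ofReal (iteratedDeriv j g₀ 0)) := by
    simp [hf]
  rw [hf0] at key
  linear_combination -key

lemma step_bound {X A : ℝ → ℂ} {C C₀ : ℝ} {n : ℕ}
    (hXA : ∀ ξ : ℝ, Complex.I * ξ * X ξ = A ξ)
    (hA : ∀ ξ : ℝ, ‖A ξ‖ ≤ C / (1+|ξ|)^n)
    (hX : ∀ ξ : ℝ, ‖X ξ‖ ≤ C₀) :
    ∀ ξ : ℝ, ‖X ξ‖ ≤ (2^(n+1) * C + 2^(n+1) * C₀) / (1+|ξ|)^(n+1) := by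
  have hC : 0 ≤ C := by
    have h := (norm_nonneg (A 0)).trans (hA 0)
    simpa using h
  have hC₀ : 0 ≤ C₀ := (norm_nonneg (X 0)).trans (hX 0)
  have h2pow : (0:ℝ) ≤ 2^(n+1) := by positivity
  have h2 : (2:ℝ) ≤ 2^(n+1) := by
    calc (2:ℝ) = 2^1 := by norm_num
      _ ≤ 2^(n+1) := pow_le_pow_right₀ one_le_two (by omega)
  intro ξ
  have hpos : (0:ℝ) < 1 + |ξ| := by positivity
  rw [le_div_iff₀ (by positivity)]
  rcases le_or_gt 1 |ξ| with h1 | h1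
  · have hnorm : |ξ| * ‖X ξ‖ = ‖A ξ‖ := by
      rw [← hXA ξ, norm_mul, norm_mul, Complex.norm_I, one_mul, Complex.norm_real,
        Real.norm_eq_abs]
    have hA' : ‖A ξ‖ * (1+|ξ|)^n ≤ C := by
      rw [← le_div_iff₀ (by positivity)]
      exact hA ξ
    have hXpos : 0 ≤ ‖X ξ‖ := norm_nonneg _
    have hstep1 : ‖X ξ‖ * (1+|ξ|)^(n+1) ≤ 2 * (‖A ξ‖ * (1+|ξ|)^n) := by
      have e1 : ‖X ξ‖ * (1+|ξ|)^(n+1) = (‖X ξ‖ * (1+|ξ|)) * (1+|ξ|)^n := by ring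
      have e2 : 2 * (‖A ξ‖ * (1+|ξ|)^n) = (2 * (|ξ| * ‖X ξ‖)) * (1+|ξ|)^n := by
        rw [hnorm]; ring
      rw [e1, e2]
      apply mul_le_mul_of_nonneg_right _ (by positivity)
      nlinarith
    have : 2 * (‖A ξ‖ * (1+|ξ|)^n) ≤ 2 * C := by linarith
    nlinarith
  · have hpow : (1+|ξ|)^(n+1) ≤ 2^(n+1) :=
      pow_le_pow_left₀ (by positivity) (by linarith) _
    have : ‖X ξ‖ * (1+|ξ|)^(n+1) ≤ C₀ * 2^(n+1) :=
      mul_le_mul (hX ξ) hpow (by positivity) hC₀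
    nlinarith

lemma R_bound (hν : 0 < ν) (hsmooth : ContDiff ℝ (⊤ : ℕ∞) g₀)
    (hdecay : ∀ k : ℕ, ∃ C : ℝ, ∀ τ : ℝ, 0 ≤ τ →
      |iteratedDeriv k g₀ τ| ≤ C * Real.exp (-ν * τ)) :
    ∀ n m j : ℕ, n ≤ m + 1 → ∃ C : ℝ, ∀ ξ : ℝ, ‖J g₀ m j ξ‖ ≤ C / (1+|ξ|)^n := by
  intro n
  induction n with
  | zero =>
    intro m j _
    obtain ⟨C, _, hC⟩ := J_bound hν hsmooth hdecay m j
    exact ⟨C, fun ξ => by simpa using hC ξ⟩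
  | succ n ih =>
    intro m j hn
    have hnm : n ≤ m := by omega
    obtain ⟨C₁, h₁⟩ := ih (m-1) j (by omega)
    obtain ⟨C₂, h₂⟩ := ih m (j+1) (by omega)
    obtain ⟨C₀, hC₀0, h₀⟩ := J_bound hν hsmooth hdecay m j
    have hC₁ : 0 ≤ C₁ := by
      have h := (norm_nonneg (J g₀ (m-1) j 0)).trans (h₁ 0)
      simpa using h
    have hC₂ : 0 ≤ C₂ := by
      have h := (norm_nonneg (J g₀ m (j+1) 0)).trans (h₂ 0)
      simpa using h
    set b : ℂ := (0:ℂ)^m * (Complex.ofReal (iteratedDeriv j g₀ 0)) with hb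
    have hbb : ∀ ξ : ℝ, ‖b‖ ≤ ‖b‖ / (1+|ξ|)^n := by
      intro ξ
      rcases Nat.eq_zero_or_pos m with hm | hm
      · have hn0 : n = 0 := by omega
        simp [hn0]
      · have : b = 0 := by
          rw [hb, zero_pow (by omega), zero_mul]
        simp [this]
    set A : ℝ → ℂ := fun ξ => (m:ℂ) * J g₀ (m-1) j ξ + J g₀ m (j+1) ξ + b with hA
    have hXA : ∀ ξ : ℝ, Complex.I * ξ * J g₀ m j ξ = A ξ :=
      fun ξ => ibp hν hsmooth hdecay m j ξ
    have hAbound : ∀ ξ : ℝ, ‖A ξ‖ ≤ ((m:ℝ) * C₁ + C₂ + ‖b‖) / (1+|ξ|)^n := by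
      intro ξ
      have hpos : (0:ℝ) < (1+|ξ|)^n := by positivity
      calc ‖A ξ‖ ≤ ‖(m:ℂ) * J g₀ (m-1) j ξ + J g₀ m (j+1) ξ‖ + ‖b‖ := norm_add_le _ _
        _ ≤ (‖(m:ℂ) * J g₀ (m-1) j ξ‖ + ‖J g₀ m (j+1) ξ‖) + ‖b‖ := by
            gcongr; exact norm_add_le _ _
        _ = (m:ℝ) * ‖J g₀ (m-1) j ξ‖ + ‖J g₀ m (j+1) ξ‖ + ‖b‖ := by
            rw [norm_mul, Complex.norm_natCast]
        _ ≤ (m:ℝ) * (C₁ / (1+|ξ|)^n) + C₂ / (1+|ξ|)^n + ‖b‖ / (1+|ξ|)^n :=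
            add_le_add (add_le_add
              (mul_le_mul_of_nonneg_left (h₁ ξ) (Nat.cast_nonneg m)) (h₂ ξ)) (hbb ξ)
        _ = ((m:ℝ) * C₁ + C₂ + ‖b‖) / (1+|ξ|)^n := by field_simp
    exact ⟨2^(n+1) * ((m:ℝ) * C₁ + C₂ + ‖b‖) + 2^(n+1) * C₀,
      step_bound hXA hAbound h₀⟩

lemma S_bound (hν : 0 < ν) (hsmooth : ContDiff ℝ (⊤ : ℕ∞) g₀) (hg0 : g₀ 0 = 0)
    (hdecay : ∀ k : ℕ, ∃ C : ℝ, ∀ τ : ℝ, 0 ≤ τ →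
      |iteratedDeriv k g₀ τ| ≤ C * Real.exp (-ν * τ)) :
    ∀ m : ℕ, ∃ C : ℝ, ∀ ξ : ℝ, ‖J g₀ m 0 ξ‖ ≤ C / (1+|ξ|)^(m+2) := by
  intro m
  induction m with
  | zero =>
    obtain ⟨C₂, h₂⟩ := R_bound hν hsmooth hdecay 1 0 1 (by omega)
    obtain ⟨C₀, _, h₀⟩ := J_bound hν hsmooth hdecay 0 0
    have hXA : ∀ ξ : ℝ, Complex.I * ξ * J g₀ 0 0 ξ = J g₀ 0 1 ξ := by
      intro ξ
      have h := ibp hν hsmooth hdecay 0 0 ξ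
      simpa [hg0] using h
    exact ⟨2^(1+1) * C₂ + 2^(1+1) * C₀, step_bound hXA h₂ h₀⟩
  | succ m ih =>
    obtain ⟨C₁, h₁⟩ := ih
    obtain ⟨C₂, h₂⟩ := R_bound hν hsmooth hdecay (m+2) (m+1) 1 (by omega)
    obtain ⟨C₀, _, h₀⟩ := J_bound hν hsmooth hdecay (m+1) 0
    have hC₁ : 0 ≤ C₁ := by
      have h := (norm_nonneg (J g₀ m 0 0)).trans (h₁ 0)
      simpa using h
    set A : ℝ → ℂ := fun ξ => ((m:ℂ)+1) * J g₀ m 0 ξ + J g₀ (m+1) 1 ξ with hA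
    have hXA : ∀ ξ : ℝ, Complex.I * ξ * J g₀ (m+1) 0 ξ = A ξ := by
      intro ξ
      have h := ibp hν hsmooth hdecay (m+1) 0 ξ
      simpa [hA] using h
    have hAbound : ∀ ξ : ℝ, ‖A ξ‖ ≤ (((m:ℝ)+1) * C₁ + C₂) / (1+|ξ|)^(m+2) := by
      intro ξ
      calc ‖A ξ‖ ≤ ‖((m:ℂ)+1) * J g₀ m 0 ξ‖ + ‖J g₀ (m+1) 1 ξ‖ := norm_add_le _ _
        _ = ((m:ℝ)+1) * ‖J g₀ m 0 ξ‖ + ‖J g₀ (m+1) 1 ξ‖ := by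
            rw [norm_mul]
            norm_cast
        _ ≤ ((m:ℝ)+1) * (C₁ / (1+|ξ|)^(m+2)) + C₂ / (1+|ξ|)^(m+2) :=
            add_le_add (mul_le_mul_of_nonneg_left (h₁ ξ) (by positivity)) (h₂ ξ)
        _ = (((m:ℝ)+1) * C₁ + C₂) / (1+|ξ|)^(m+2) := by field_simp
    refine ⟨2^(m+2+1) * (((m:ℝ)+1) * C₁ + C₂) + 2^(m+2+1) * C₀, fun ξ => ?_⟩
    exact step_bound hXA hAbound h₀ ξ

lemma hasDerivAt_J (hν : 0 < ν) (hsmooth : ContDiff ℝ (⊤ : ℕ∞) g₀)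
    (hdecay : ∀ k : ℕ, ∃ C : ℝ, ∀ τ : ℝ, 0 ≤ τ →
      |iteratedDeriv k g₀ τ| ≤ C * Real.exp (-ν * τ)) (k : ℕ) (ξ : ℝ) :
    HasDerivAt (fun ξ : ℝ => J g₀ k 0 ξ) (-Complex.I * J g₀ (k+1) 0 ξ) ξ := by
  obtain ⟨C, hC0, hC⟩ := decay_bound hν hdecay (k+1) 0
  have key := hasDerivAt_integral_of_dominated_loc_of_deriv_le (𝕜 := ℝ)
    (μ := volume.restrict (Ioi (0:ℝ)))
    (F := fun (x : ℝ) (τ : ℝ) =>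
      Complex.exp (-Complex.I * x * τ) * (τ:ℂ)^k * (Complex.ofReal (iteratedDeriv 0 g₀ τ)))
    (F' := fun (x : ℝ) (τ : ℝ) =>
      -Complex.I * (Complex.exp (-Complex.I * x * τ) * (τ:ℂ)^(k+1) * (Complex.ofReal (iteratedDeriv 0 g₀ τ))))
    (x₀ := ξ) (bound := fun τ => C * Real.exp (-(ν/2) * τ)) (Metric.ball_mem_nhds ξ one_pos)
    (Eventually.of_forall fun x => (cont_integrand hsmooth k 0 x).aestronglyMeasurable)
    (integrableOn_integrand hν hsmooth hdecay k 0 ξ)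
    ((continuous_const.mul (cont_integrand hsmooth (k+1) 0 ξ)).aestronglyMeasurable)
    ?_ ((exp_neg_integrableOn_Ioi 0 (by positivity : (0:ℝ) < ν/2)).const_mul C) ?_
  · have h2 : (∫ τ in Ioi (0:ℝ),
        -Complex.I * (Complex.exp (-Complex.I * ξ * τ) * (τ:ℂ)^(k+1) * (Complex.ofReal (iteratedDeriv 0 g₀ τ))))
        = -Complex.I * J g₀ (k+1) 0 ξ := by
      rw [integral_const_mul]
      rfl
    rw [← h2]
    exact key.2
  · refine (ae_restrict_iff' measurableSet_Ioi).2 (ae_of_all _ fun τ hτ => fun x _ => ?_)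
    rw [norm_mul, norm_neg, Complex.norm_I, one_mul, norm_integrand]
    exact hC τ (le_of_lt hτ)
  · refine ae_of_all _ fun τ => fun x _ => ?_
    have h1 : HasDerivAt (fun x : ℝ => Complex.exp (-Complex.I * x * τ))
        (Complex.exp (-Complex.I * x * τ) * (-Complex.I * τ)) x := by
      have hz : HasDerivAt (fun z : ℂ => Complex.exp (-Complex.I * z * τ))
          (Complex.exp (-Complex.I * x * τ) * (-Complex.I * τ)) (x:ℂ) := by
        have := (((hasDerivAt_id ((x:ℝ):ℂ)).mul_const ((τ:ℝ):ℂ)).const_mul (-Complex.I)).cexp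
        simpa [mul_assoc] using this
      exact hz.comp_ofReal
    have h := h1.mul_const (((τ:ℝ):ℂ)^k * (Complex.ofReal (iteratedDeriv 0 g₀ τ)))
    simp only [← mul_assoc] at h
    convert h using 1
    all_goals first | rfl | ring | (simp only [Pi.mul_apply]; ring)

lemma iter_formula (hν : 0 < ν) (hsmooth : ContDiff ℝ (⊤ : ℕ∞) g₀)
    (hdecay : ∀ k : ℕ, ∃ C : ℝ, ∀ τ : ℝ, 0 ≤ τ →
      |iteratedDeriv k g₀ τ| ≤ C * Real.exp (-ν * τ)) (k : ℕ) :
    iteratedDeriv k (G0 g₀) = fun ξ => (-Complex.I)^k * J g₀ k 0 ξ := by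
  induction k with
  | zero =>
    funext ξ
    simp only [iteratedDeriv_zero, pow_zero, one_mul, J, G0, iteratedDeriv_zero,
      pow_zero, mul_one]
  | succ k ih =>
    funext ξ
    rw [iteratedDeriv_succ, ih]
    have h := (hasDerivAt_J hν hsmooth hdecay k ξ).const_mul ((-Complex.I)^k)
    rw [h.deriv]
    ring

end Stmt1Aux

theorem stmt1 (g₀ : ℝ → ℝ) (ν : ℝ) (hν : 0 < ν)
    (hsmooth : ContDiff ℝ (⊤ : ℕ∞) g₀) (hg0 : g₀ 0 = 0)
    (hdecay : ∀ k : ℕ, ∃ C : ℝ, ∀ τ : ℝ, 0 ≤ τ →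
      |iteratedDeriv k g₀ τ| ≤ C * Real.exp (-ν * τ)) :
    ∀ k : ℕ, ∃ C : ℝ, ∀ ξ : ℝ,
      ‖iteratedDeriv k (G0 g₀) ξ‖ ≤ C * (1 + |ξ|) ^ (-(k:ℝ) - 2) := by
  intro k
  obtain ⟨C, hC⟩ := Stmt1Aux.S_bound hν hsmooth hg0 hdecay k
  refine ⟨C, fun ξ => ?_⟩
  have hpos : (0:ℝ) < 1 + |ξ| := by positivity
  have hnorm : ‖iteratedDeriv k (G0 g₀) ξ‖ = ‖Stmt1Aux.J g₀ k 0 ξ‖ := by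
    rw [Stmt1Aux.iter_formula hν hsmooth hdecay k]
    rw [norm_mul, norm_pow, norm_neg, Complex.norm_I, one_pow, one_mul]
  rw [hnorm]
  have hrw : C * (1 + |ξ|) ^ (-(k:ℝ) - 2) = C / (1+|ξ|)^(k+2) := by
    rw [show (-(k:ℝ) - 2) = -(((k+2 : ℕ)):ℝ) by push_cast; ring]
    rw [Real.rpow_neg hpos.le, Real.rpow_natCast, div_eq_mul_inv]
  rw [hrw]
  exact hC ξ
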